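/- arXiv:2409.03648 — 2 statements merged into one kernel-verified Lean document; each statement's English description precedes it below -/
import Mathlib

section
/- Let d ≥ 1, n ≥ 1, g₁,…,gₙ ∈ ℝ, A ∈ ℂ with A ≠ 0, ω ∈ ℝ and k ∈ ℝ^d, and let φ(t,x) = A·exp(i(ωt − k·x)) be the plane wave. Then φ satisfies the higher-derivative Carrollian field equation (□_{g₁} ∘ ⋯ ∘ □_{gₙ})φ = 0 identically on ℝ × ℝ^d if and only if there exists j ∈ {1,…,n} with g_j·ω² + ‖k‖² = 0. -/
/-! A plane wave is a joint eigenfunction of `∂²/∂t²` and of every `∂²/∂x_a²`, with eigenvalues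
`-ω²` and `-k_a²`, so `□_g` multiplies its amplitude by `-(g ω² + ‖k‖²)`. The composite operator
therefore multiplies the amplitude by the product of these factors, and a plane wave vanishes
identically exactly when its amplitude does. -/

/-- Second time derivative: `(∂²φ/∂t²)(t,x)`. -/
noncomputable def dtt (d : ℕ) (φ : ℝ × EuclideanSpace ℝ (Fin d) → ℂ) :
    ℝ × EuclideanSpace ℝ (Fin d) → ℂ :=
  fun p => deriv (deriv (fun u : ℝ => φ (u, p.2))) p.1

/-- Spatial Laplacian: `Σ_a (∂²φ/∂x_a²)(t,x)`, computed as second directional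
derivatives along the coordinate directions. -/
noncomputable def lap (d : ℕ) (φ : ℝ × EuclideanSpace ℝ (Fin d) → ℂ) :
    ℝ × EuclideanSpace ℝ (Fin d) → ℂ :=
  fun p => ∑ a : Fin d,
    deriv (deriv (fun u : ℝ => φ (p.1, p.2 + u • EuclideanSpace.single a (1 : ℝ)))) 0

/-- The Carrollian operator `□_g φ = g ∂²φ/∂t² + Δφ`. -/
noncomputable def carrollBox (d : ℕ) (g : ℝ) (φ : ℝ × EuclideanSpace ℝ (Fin d) → ℂ) :
    ℝ × EuclideanSpace ℝ (Fin d) → ℂ :=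
  fun p => (g : ℂ) * dtt d φ p + lap d φ p

/-- The plane wave `φ(t,x) = A·exp(i(ωt − k·x))`. -/
noncomputable def planeWave (d : ℕ) (A : ℂ) (ω : ℝ) (k : EuclideanSpace ℝ (Fin d)) :
    ℝ × EuclideanSpace ℝ (Fin d) → ℂ :=
  fun p => A * Complex.exp (Complex.I * (((ω * p.1 : ℝ) : ℂ) - ((inner ℝ k p.2 : ℝ) : ℂ)))

open Complex

lemma hasDerivAt_const_mul_cexp_affine (c a b : ℂ) (u : ℝ) :
    HasDerivAt (fun u : ℝ => c * cexp (a * u + b)) (c * a * cexp (a * u + b)) u := by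
  have h : HasDerivAt (fun u : ℝ => a * (u : ℂ) + b) a u := by
    simpa using (ofRealCLM.hasDerivAt (x := u)).const_mul a |>.add_const b
  exact (h.cexp.const_mul c).congr_deriv (by ring)

lemma deriv_deriv_const_mul_cexp_affine (c a b : ℂ) (u : ℝ) :
    deriv (deriv fun u : ℝ => c * cexp (a * u + b)) u = c * a ^ 2 * cexp (a * u + b) := by
  have h : deriv (fun u : ℝ => c * cexp (a * u + b)) = fun u : ℝ => c * a * cexp (a * u + b) :=
    funext fun v => (hasDerivAt_const_mul_cexp_affine c a b v).deriv
  rw [h, (hasDerivAt_const_mul_cexp_affine (c * a) a b u).deriv]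
  ring

section PlaneWave

variable {d : ℕ}

noncomputable def planeWavePhase (ω : ℝ) (k : EuclideanSpace ℝ (Fin d))
    (p : ℝ × EuclideanSpace ℝ (Fin d)) : ℝ :=
  ω * p.1 - inner ℝ k p.2

lemma planeWavePhase_add_smul (ω : ℝ) (k : EuclideanSpace ℝ (Fin d))
    (p v : ℝ × EuclideanSpace ℝ (Fin d)) (u : ℝ) :
    planeWavePhase ω k (p + u • v) = u * planeWavePhase ω k v + planeWavePhase ω k p := by
  simp only [planeWavePhase, Prod.fst_add, Prod.snd_add, Prod.smul_fst, Prod.smul_snd,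
    smul_eq_mul, inner_add_right, real_inner_smul_right]
  ring

lemma planeWave_eq (A : ℂ) (ω : ℝ) (k : EuclideanSpace ℝ (Fin d))
    (p : ℝ × EuclideanSpace ℝ (Fin d)) :
    planeWave d A ω k p = A * cexp (I * planeWavePhase ω k p) := by
  simp [planeWave, planeWavePhase]

lemma planeWave_eq_zero_iff (A : ℂ) (ω : ℝ) (k : EuclideanSpace ℝ (Fin d))
    (p : ℝ × EuclideanSpace ℝ (Fin d)) : planeWave d A ω k p = 0 ↔ A = 0 := by
  simp [planeWave_eq, exp_ne_zero]

lemma deriv_deriv_planeWave_add_smul (A : ℂ) (ω : ℝ) (k : EuclideanSpace ℝ (Fin d))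
    (p v : ℝ × EuclideanSpace ℝ (Fin d)) (s : ℝ) :
    deriv (deriv fun u : ℝ => planeWave d A ω k (p + u • v)) s
      = -(planeWavePhase ω k v : ℂ) ^ 2 * planeWave d A ω k (p + s • v) := by
  have h (u : ℝ) : planeWave d A ω k (p + u • v)
      = A * cexp (I * planeWavePhase ω k v * u + I * planeWavePhase ω k p) := by
    rw [planeWave_eq, planeWavePhase_add_smul]
    congr 2
    push_cast
    ring
  rw [funext h, deriv_deriv_const_mul_cexp_affine, h]
  linear_combination A * (planeWavePhase ω k v : ℂ) ^ 2
    * cexp (I * planeWavePhase ω k v * s + I * planeWavePhase ω k p) * I_sq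

lemma dtt_planeWave (A : ℂ) (ω : ℝ) (k : EuclideanSpace ℝ (Fin d))
    (p : ℝ × EuclideanSpace ℝ (Fin d)) :
    dtt d (planeWave d A ω k) p = -(ω : ℂ) ^ 2 * planeWave d A ω k p := by
  have hline : (fun u : ℝ => planeWave d A ω k (u, p.2))
      = fun u : ℝ => planeWave d A ω k ((0, p.2) + u • (1, 0)) := by
    funext u; congr 1; ext <;> simp
  rw [dtt, hline, deriv_deriv_planeWave_add_smul]
  congr 2
  · simp [planeWavePhase]
  · ext <;> simp

lemma lap_planeWave (A : ℂ) (ω : ℝ) (k : EuclideanSpace ℝ (Fin d))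
    (p : ℝ × EuclideanSpace ℝ (Fin d)) :
    lap d (planeWave d A ω k) p = -((‖k‖ ^ 2 : ℝ) : ℂ) * planeWave d A ω k p := by
  have hline (a : Fin d) :
      (fun u : ℝ => planeWave d A ω k (p.1, p.2 + u • EuclideanSpace.single a 1))
        = fun u : ℝ => planeWave d A ω k (p + u • (0, EuclideanSpace.single a 1)) := by
    funext u; congr 1; ext <;> simp
  simp only [lap, hline, deriv_deriv_planeWave_add_smul, zero_smul, add_zero, ← Finset.sum_mul,
    EuclideanSpace.norm_sq_eq]
  simp [planeWavePhase, EuclideanSpace.inner_single_right]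

noncomputable def carrollSymbol (g ω : ℝ) (k : EuclideanSpace ℝ (Fin d)) : ℝ :=
  -(g * ω ^ 2 + ‖k‖ ^ 2)

lemma carrollBox_planeWave (g : ℝ) (A : ℂ) (ω : ℝ) (k : EuclideanSpace ℝ (Fin d)) :
    carrollBox d g (planeWave d A ω k) = planeWave d (carrollSymbol g ω k * A) ω k := by
  funext p
  simp only [carrollBox, dtt_planeWave, lap_planeWave, planeWave_eq, carrollSymbol]
  push_cast
  ring

lemma foldr_carrollBox_planeWave (l : List ℝ) (A : ℂ) (ω : ℝ) (k : EuclideanSpace ℝ (Fin d)) :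
    l.foldr (carrollBox d) (planeWave d A ω k)
      = planeWave d ((l.map fun g => (carrollSymbol g ω k : ℂ)).prod * A) ω k := by
  induction l with
  | nil => simp
  | cons g l ih =>
    rw [List.foldr_cons, ih, carrollBox_planeWave, List.map_cons, List.prod_cons, mul_assoc]

end PlaneWave

theorem planeWave_solves_iff_general (d : ℕ) (n : ℕ)
    (g : Fin n → ℝ) (A : ℂ) (hA : A ≠ 0) (ω : ℝ) (k : EuclideanSpace ℝ (Fin d)) :
    (∀ p : ℝ × EuclideanSpace ℝ (Fin d),
        (List.ofFn g).foldr (carrollBox d) (planeWave d A ω k) p = 0)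
      ↔ ∃ j : Fin n, g j * ω ^ 2 + ‖k‖ ^ 2 = 0 := by
  simp only [foldr_carrollBox_planeWave, planeWave_eq_zero_iff, forall_const, mul_eq_zero, hA,
    or_false, List.map_ofFn, List.prod_ofFn, Finset.prod_eq_zero_iff, Finset.mem_univ, true_and,
    Function.comp_apply, ofReal_eq_zero, carrollSymbol, neg_eq_zero]

/-- a plane wave with nonzero amplitude solves
`(□_{g₁} ∘ ⋯ ∘ □_{gₙ})φ = 0` iff some factor of the dispersion polynomial vanishes,
i.e. iff `∃ j, g_j ω² + ‖k‖² = 0`. -/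
theorem planeWave_solves_iff (d : ℕ) (hd : 1 ≤ d) (n : ℕ) (hn : 1 ≤ n)
    (g : Fin n → ℝ) (A : ℂ) (hA : A ≠ 0) (ω : ℝ) (k : EuclideanSpace ℝ (Fin d)) :
    (∀ p : ℝ × EuclideanSpace ℝ (Fin d),
        (List.ofFn g).foldr (carrollBox d) (planeWave d A ω k) p = 0)
      ↔ ∃ j : Fin n, g j * ω ^ 2 + ‖k‖ ^ 2 = 0 :=
  planeWave_solves_iff_general d n g A hA ω k
end

section
/- (Ostrogradsky's theorem for Carrollian scalar field theories, unboundedness direction.) Let n ≥ 2, let g₁,…,gₙ ∈ ℝ be coupling constants with ∏_{j=1}^n g_j ≠ 0, and let L : ℝⁿ → ℝ be an arbitrary function. Define the Hamiltonian H : ℝⁿ × ℝⁿ → ℝ by H(Q, p) = Σ_{i=1}^{n−1} 2·(−1)^{n−i}·(∏_{j=1}^n g_j)·p_i·Q_i + 2·(∏_{j=1}^n g_j)·p_n² − L(Q₁,…,Qₙ). Then H is not bounded below on ℝⁿ × ℝⁿ. -/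
/-- Ostrogradsky's theorem for Carrollian scalar field theories,
unboundedness direction: for `n ≥ 2` and `g₁⋯gₙ ≠ 0`, the Hamiltonian
`H(Q,p) = Σ_{i=1}^{n−1} 2(−1)^{n−i} g₁⋯gₙ p_i Q_i + 2 g₁⋯gₙ p_n² − L(Q)`
is not bounded below.  (Indices `i = 1,…,n` are encoded as `Fin n` values `0,…,n−1`.) -/
theorem carrollian_ostrogradsky_unbounded (n : ℕ) (hn : 2 ≤ n) (g : Fin n → ℝ)
    (hg : (∏ j : Fin n, g j) ≠ 0) (L : (Fin n → ℝ) → ℝ) :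
    ¬ BddBelow (Set.range (fun Qp : (Fin n → ℝ) × (Fin n → ℝ) =>
        (∑ i ∈ Finset.univ.filter (fun i : Fin n => (i : ℕ) + 1 < n),
            2 * (-1 : ℝ) ^ (n - ((i : ℕ) + 1)) * (∏ j : Fin n, g j) * Qp.2 i * Qp.1 i)
          + 2 * (∏ j : Fin n, g j) * (Qp.2 ⟨n - 1, by omega⟩) ^ 2 - L Qp.1)) := by
  rintro ⟨b, hbb⟩
  have hnpos : 0 < n := by omega
  set G : ℝ := ∏ j : Fin n, g j with hG
  set c : ℝ := 2 * (-1 : ℝ) ^ (n - 1) * G with hc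
  have hcne : c ≠ 0 := by
    apply mul_ne_zero _ hg
    apply mul_ne_zero two_ne_zero
    exact pow_ne_zero _ (by norm_num)
  set z : Fin n := ⟨0, hnpos⟩ with hz
  set Q : Fin n → ℝ := Pi.single z 1 with hQ
  set t : ℝ := (b + L Q - 1) / c with ht
  set p : Fin n → ℝ := Pi.single z t with hp
  have hmem := hbb (Set.mem_range_self (⟨Q, p⟩ : (Fin n → ℝ) × (Fin n → ℝ)))
  simp only at hmem
  have hlast : p ⟨n - 1, by omega⟩ = 0 := by
    apply Pi.single_eq_of_ne
    intro h
    have := congrArg Fin.val h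
    simp [hz] at this
    omega
  have hsum : (∑ i ∈ Finset.univ.filter (fun i : Fin n => (i : ℕ) + 1 < n),
      2 * (-1 : ℝ) ^ (n - ((i : ℕ) + 1)) * G * p i * Q i) = c * t := by
    rw [Finset.sum_eq_single_of_mem z]
    · simp [hp, hQ, hc, hz]
    · simp [Finset.mem_filter, hz]
      omega
    · intro i _ hi
      rw [hp, Pi.single_eq_of_ne hi]
      ring
  rw [hsum, hlast] at hmem
  have hct : c * t = b + L Q - 1 := by
    rw [ht, mul_div_cancel₀ _ hcne]
  rw [hct] at hmem
  norm_num at hmem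
  linarith
end
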